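/- arXiv:2306.01165 — 7 statements merged into one kernel-verified Lean document; each statement's English description precedes it below -/
import Mathlib

section
/- Let S be a t-conorm and R a fuzzy binary relation on X. If R = S(P, I) for some asymmetric fuzzy binary relation P and symmetric fuzzy binary relation I, then for every x, y ∈ X, I(x,y) = min(R(x,y), R(y,x)). -/
structure Tconorm where
  S : unitInterval → unitInterval → unitInterval
  comm : ∀ a b, S a b = S b a
  assoc : ∀ a b c, S a (S b c) = S (S a b) c
  mono : ∀ a b c d, a ≤ c → b ≤ d → S a b ≤ S c d
  S_zero : ∀ a, S a 0 = a
  S_one : ∀ a, S a 1 = 1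

structure Tnorm where
  T : unitInterval → unitInterval → unitInterval
  comm : ∀ a b, T a b = T b a
  assoc : ∀ a b c, T a (T b c) = T (T a b) c
  mono : ∀ a b c d, a ≤ c → b ≤ d → T a b ≤ T c d
  T_one : ∀ a, T a 1 = a
  T_zero : ∀ a, T a 0 = 0

def FAsymm {X : Type*} (P : X → X → unitInterval) : Prop :=
  ∀ x y, 0 < P x y → P y x = 0

def FSymm {X : Type*} (I : X → X → unitInterval) : Prop :=
  ∀ x y, I x y = I y x

/-- `(P, I)` is a weak decomposition of `R` with respect to the t-conorm `S`. -/
def IsWeakDecomp {X : Type*} (S : Tconorm) (R P I : X → X → unitInterval) : Prop :=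
  FAsymm P ∧ FSymm I ∧ (∀ x y, R x y = S.S (P x y) (I x y)) ∧
    ∀ x y, I x y = 1 → P x y = 0

/-- `(P, I)` is a strong decomposition of `R` with respect to `(T, S)`. -/
def IsStrongDecomp {X : Type*} (T : Tnorm) (S : Tconorm)
    (R P I : X → X → unitInterval) : Prop :=
  FAsymm P ∧ FSymm I ∧ (∀ x y, R x y = S.S (P x y) (I x y)) ∧
    ∀ x y, T.T (P x y) (I x y) = 0

/-- The triplet `(R, P, I)` is a fuzzy preference (FP1–FP6). -/
def IsFuzzyPref {X : Type*} (R P I : X → X → unitInterval) : Prop :=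
  (∀ x y, 0 < P x y → P y x = 0) ∧
  (∀ x y, I x y = I y x) ∧
  (∀ x y, P x y ≤ R x y) ∧
  (∀ x y, R y x < R x y ↔ 0 < P x y) ∧
  (∀ x y, P x y = 0 → R x y = I x y) ∧
  (∀ x y z w, I x y ≤ I z w → P x y ≤ P z w → R x y ≤ R z w)

/-!
`S(0, a) = a` and monotonicity give `I ≤ R` pointwise, with equality wherever `P` vanishes.
By asymmetry `P` vanishes at `(x, y)` or at `(y, x)`, and the symmetry of `I` turns the
inequality at the other pair into `I x y ≤ R y x` or `I x y ≤ R x y`.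
-/

namespace Tconorm

variable (S : Tconorm)

theorem zero_S (a : unitInterval) : S.S 0 a = a := by
  rw [S.comm, S.S_zero]

theorem le_S_right (a b : unitInterval) : b ≤ S.S a b := by
  simpa only [S.zero_S] using S.mono 0 b a b unitInterval.nonneg' le_rfl

end Tconorm

theorem FAsymm.eq_zero_or_eq_zero {X : Type*} {P : X → X → unitInterval} (hP : FAsymm P)
    (x y : X) : P x y = 0 ∨ P y x = 0 := by
  rcases (unitInterval.nonneg' (t := P x y)).eq_or_lt with h | h
  · exact Or.inl h.symm
  · exact Or.inr (hP x y h)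

/-- If `R = S(P, I)` with `P` asymmetric and `I` symmetric, then
`I(x,y) = min(R(x,y), R(y,x))`. -/
theorem symmetric_component_is_min {X : Type*} (S : Tconorm)
    (R P I : X → X → unitInterval) (hP : FAsymm P) (hI : FSymm I)
    (hdec : ∀ x y, R x y = S.S (P x y) (I x y)) :
    ∀ x y, I x y = min (R x y) (R y x) := by
  intro x y
  have hle : ∀ u v, I u v ≤ R u v := fun u v => (hdec u v).symm ▸ S.le_S_right _ _
  rcases hP.eq_zero_or_eq_zero x y with h | h
  · have hR : R x y = I x y := by rw [hdec, h, S.zero_S]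
    rw [hR, min_eq_left (hI x y ▸ hle y x)]
  · have hR : R y x = I x y := by rw [hdec, h, S.zero_S, hI]
    rw [hR, min_eq_right (hle x y)]
end

section
/- Let R be a fuzzy binary relation on X. Define I(x,y) = min(R(x,y), R(y,x)) and P_Ł(x,y) = R(x,y) − R(y,x) if R(x,y) > R(y,x), and 0 otherwise. Then (P_Ł, I) is a weak decomposition of R with respect to the Łukasiewicz t-conorm S_Ł(a,b) = min(1, a+b): P_Ł is asymmetric, I is symmetric, R(x,y) = min(1, P_Ł(x,y) + I(x,y)) for all x,y, and I(x,y) = 1 implies P_Ł(x,y) = 0. -/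
theorem lt_of_ite_lt_sub_pos {α : Type*} [Zero α] [Sub α] [LinearOrder α] {a b : α}
    (h : 0 < if b < a then a - b else 0) : b < a := by
  by_contra hba
  rw [if_neg hba] at h
  exact lt_irrefl _ h

theorem ite_lt_sub_eq_zero_of_le {α : Type*} [Zero α] [Sub α] [LinearOrder α] {a b : α}
    (h : a ≤ b) : (if b < a then a - b else 0) = 0 :=
  if_neg h.not_gt

theorem ite_lt_sub_add_min_eq {α : Type*} [AddGroup α] [LinearOrder α] (a b : α) :
    (if b < a then a - b else 0) + min a b = a := by
  split_ifs with h
  · rw [min_eq_right h.le, sub_add_cancel]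
  · rw [min_eq_left (not_lt.1 h), zero_add]

theorem eq_of_min_eq_of_le {α : Type*} [LinearOrder α] {a b c : α}
    (h : min a b = c) (ha : a ≤ c) (hb : b ≤ c) : a = b := by
  have hca : c ≤ a := h ▸ min_le_left a b
  have hcb : c ≤ b := h ▸ min_le_right a b
  exact (le_antisymm ha hca).trans (le_antisymm hb hcb).symm

/-- The canonical pair `(P_Ł, I)` is a weak decomposition of `R` with respect to the
Łukasiewicz t-conorm `S_Ł(a,b) = min(1, a + b)`. -/
theorem lukasiewicz_weak_decomposition {X : Type*} (R : X → X → ℝ)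
    (hR : ∀ x y, R x y ∈ Set.Icc (0 : ℝ) 1) :
    let I : X → X → ℝ := fun x y => min (R x y) (R y x)
    let P : X → X → ℝ := fun x y => if R y x < R x y then R x y - R y x else 0
    (∀ x y, 0 < P x y → P y x = 0) ∧
    (∀ x y, I x y = I y x) ∧
    (∀ x y, R x y = min 1 (P x y + I x y)) ∧
    (∀ x y, I x y = 1 → P x y = 0) := by
  intro I P
  refine ⟨fun x y hP => ?_, fun x y => min_comm _ _, fun x y => ?_, fun x y hI => ?_⟩
  · exact ite_lt_sub_eq_zero_of_le (lt_of_ite_lt_sub_pos hP).le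
  · simp only [P, I]
    rw [ite_lt_sub_add_min_eq, min_eq_right (hR x y).2]
  · exact ite_lt_sub_eq_zero_of_le (eq_of_min_eq_of_le hI (hR x y).2 (hR y x).2).le
end

section
/- Let R be a fuzzy binary relation on X. Define I(x,y) = min(R(x,y), R(y,x)) and P(x,y) = (R(x,y) − R(y,x))/(1 − R(y,x)) if R(x,y) > R(y,x), and 0 otherwise. Then (P, I) is a weak decomposition of R with respect to the probabilistic sum t-conorm S_P(a,b) = a + b − ab: P is asymmetric, I is symmetric, R(x,y) = P(x,y) + I(x,y) − P(x,y)·I(x,y) for all x,y, and I(x,y) = 1 implies P(x,y) = 0. -/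
-- Solving `S_P(p, b) = a` for `p`: this is where the formula for `P` comes from.
theorem sub_div_one_sub_add_sub_mul (a : ℝ) {b : ℝ} (hb : b ≠ 1) :
    (a - b) / (1 - b) + b - (a - b) / (1 - b) * b = a := by
  have hb' : 1 - b ≠ 0 := sub_ne_zero.mpr hb.symm
  field_simp
  ring

/-- The canonical pair `(P, I)` is a weak decomposition of `R` with respect to the
probabilistic sum t-conorm `S_P(a,b) = a + b - a*b`. -/
theorem probabilistic_weak_decomposition {X : Type*} (R : X → X → ℝ)
    (hR : ∀ x y, R x y ∈ Set.Icc (0 : ℝ) 1) :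
    let I : X → X → ℝ := fun x y => min (R x y) (R y x)
    let P : X → X → ℝ := fun x y =>
      if R y x < R x y then (R x y - R y x) / (1 - R y x) else 0
    (∀ x y, 0 < P x y → P y x = 0) ∧
    (∀ x y, I x y = I y x) ∧
    (∀ x y, R x y = P x y + I x y - P x y * I x y) ∧
    (∀ x y, I x y = 1 → P x y = 0) := by
  intro I P
  refine ⟨fun x y hP => ?_, fun x y => min_comm _ _, fun x y => ?_, fun x y hI => ?_⟩
  · have hlt : R y x < R x y := by
      by_contra h
      simp [P, h] at hP
    simp [P, hlt.not_gt]
  · by_cases hlt : R y x < R x y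
    · simp only [P, I, if_pos hlt, min_eq_right hlt.le]
      exact (sub_div_one_sub_add_sub_mul _ (hlt.trans_le (hR x y).2).ne).symm
    · simp only [P, I, if_neg hlt, min_eq_left (not_lt.mp hlt)]
      ring
  · have hxy : R x y = 1 := le_antisymm (hR x y).2 (hI ▸ min_le_left _ _)
    have hyx : R y x = 1 := le_antisymm (hR y x).2 (hI ▸ min_le_right _ _)
    simp [P, hxy, hyx]
end

section
/- Let S be a t-conorm continuous in its first coordinate with the property that for all w, s, t ∈ [0,1], if S(t,w) = S(s,w) and s ≠ t then S(t,w) = w. Then for any fuzzy binary relation R on X, there is at most one weak decomposition (P,I) of R with respect to S such that (R,P,I) is a fuzzy preference. -/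
/-!
Conditions FP1, FP2, FP4 and FP5 force the indifference of a fuzzy preference to be
`min (R x y) (R y x)`, so `I = I'`. If `P x y ≠ P' x y`, then `S (P x y) w = S (P' x y) w`
for `w = I x y`, and the hypothesis on `S` collapses `R x y` to `w ≤ R y x`; by FP4 both
`P x y` and `P' x y` then vanish, a contradiction.
-/

namespace IsFuzzyPref

variable {X : Type*} {R P I : X → X → unitInterval}

theorem indiff_eq_min (hp : IsFuzzyPref R P I) (x y : X) :
    I x y = min (R x y) (R y x) := by
  obtain ⟨hasymm, hsymm, -, hstrict, hzero, -⟩ := hp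
  rcases (unitInterval.nonneg' : 0 ≤ P x y).eq_or_lt with hP | hP
  · have hle : R x y ≤ R y x := not_lt.mp fun hlt => ((hstrict x y).mp hlt).ne hP
    rw [min_eq_left hle, hzero x y hP.symm]
  · have hlt : R y x < R x y := (hstrict x y).mpr hP
    rw [min_eq_right hlt.le, hsymm, hzero y x (hasymm x y hP)]

theorem strict_eq_zero_of_eq_indiff (hp : IsFuzzyPref R P I) {x y : X}
    (h : R x y = I x y) : P x y = 0 := by
  have hle : R x y ≤ R y x := by
    rw [h, hp.indiff_eq_min]
    exact min_le_right _ _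
  by_contra hne
  exact hle.not_gt ((hp.2.2.2.1 x y).mpr (unitInterval.pos_iff_ne_zero.mpr hne))

end IsFuzzyPref

theorem unique_preference_decomposition_general {X : Type*} (S : Tconorm)
    (hq : ∀ w s t : unitInterval, S.S t w = S.S s w → s ≠ t → S.S t w = w)
    (R P I P' I' : X → X → unitInterval)
    (h : IsWeakDecomp S R P I) (h' : IsWeakDecomp S R P' I')
    (hp : IsFuzzyPref R P I) (hp' : IsFuzzyPref R P' I') :
    P = P' ∧ I = I' := by
  have hI : I = I' := funext₂ fun x y => by rw [hp.indiff_eq_min, hp'.indiff_eq_min]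
  refine ⟨funext₂ fun x y => ?_, hI⟩
  by_contra hne
  have hS : S.S (P x y) (I x y) = S.S (P' x y) (I x y) := by
    rw [← h.2.2.1, hI, ← h'.2.2.1]
  have hRI : R x y = I x y := (h.2.2.1 x y).trans (hq _ _ _ hS (Ne.symm hne))
  have hRI' : R x y = I' x y := hRI.trans (congrFun₂ hI x y)
  exact hne ((hp.strict_eq_zero_of_eq_indiff hRI).trans
    (hp'.strict_eq_zero_of_eq_indiff hRI').symm)

/-- If `S` is continuous in the first coordinate and `S(t,w) = S(s,w)` with `s ≠ t`
implies `S(t,w) = w`, then each fuzzy binary relation admits at most one weak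
decomposition inducing a fuzzy preference. -/
theorem unique_preference_decomposition {X : Type*} (S : Tconorm)
    (hc : ∀ b, Continuous fun a => S.S a b)
    (hq : ∀ w s t : unitInterval, S.S t w = S.S s w → s ≠ t → S.S t w = w)
    (R P I P' I' : X → X → unitInterval)
    (h : IsWeakDecomp S R P I) (h' : IsWeakDecomp S R P' I')
    (hp : IsFuzzyPref R P I) (hp' : IsFuzzyPref R P' I') :
    P = P' ∧ I = I' :=
  unique_preference_decomposition_general S hq R P I P' I' h h' hp hp'
end

section
/- Every fuzzy binary relation R on X strongly decomposes, in a unique way, with respect to the Łukasiewicz t-norm T_Ł(x,y) = max(0, x+y−1) and the Łukasiewicz t-conorm S_Ł(x,y) = min(1, x+y). Explicitly, the unique strong decomposition is given by I(x,y) = min(R(x,y), R(y,x)) and P(x,y) = R(x,y) − R(y,x) if R(x,y) > R(y,x), 0 otherwise. -/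
/-!
The Łukasiewicz t-norm of `P x y` and `I x y` vanishes exactly when `P x y + I x y ≤ 1`, and
then their t-conorm is the plain sum; so a strong decomposition is the same as a splitting
`R = P + I`. For such a splitting, if `P x y = 0` then `I x y = R x y ≤ R y x`, and otherwise
asymmetry gives `P y x = 0`, so `I x y = R y x ≤ R x y`. Either way `I x y` is the smaller of
`R x y` and `R y x`, and `P = R - I`.
-/

theorem lukasiewicz_tnorm_eq_zero_iff {s : ℝ} : max 0 (s - 1) = 0 ↔ s ≤ 1 := by
  rw [max_eq_left_iff, sub_nonpos]

theorem ite_sub_add_min (a b : ℝ) : (if b < a then a - b else 0) + min a b = a := by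
  split_ifs with h
  · rw [min_eq_right h.le]; ring
  · rw [min_eq_left (not_lt.mp h), zero_add]

theorem eq_min_of_asymm_add_symm_eq {X : Type*} {R P I : X → X → ℝ}
    (hP : ∀ x y, 0 ≤ P x y) (hasymm : ∀ x y, 0 < P x y → P y x = 0)
    (hsymm : ∀ x y, I x y = I y x) (hsum : ∀ x y, P x y + I x y = R x y) (x y : X) :
    I x y = min (R x y) (R y x) := by
  have hxy := hsum x y
  have hyx := hsum y x
  rcases (hP x y).eq_or_lt with hzero | hpos
  · have := hP y x
    rw [min_eq_left] <;> linarith [hsymm x y]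
  · have := hasymm x y hpos
    rw [min_eq_right] <;> linarith [hsymm x y]

/-- Every fuzzy binary relation strongly decomposes, in a unique way, with respect to the
Łukasiewicz t-norm and t-conorm; the decomposition is given explicitly. -/
theorem lukasiewicz_unique_strong_decomposition {X : Type*} (R : X → X → ℝ)
    (hR : ∀ x y, R x y ∈ Set.Icc (0 : ℝ) 1) :
    let I : X → X → ℝ := fun x y => min (R x y) (R y x)
    let P : X → X → ℝ := fun x y => if R y x < R x y then R x y - R y x else 0
    ((∀ x y, 0 < P x y → P y x = 0) ∧
     (∀ x y, I x y = I y x) ∧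
     (∀ x y, R x y = min 1 (P x y + I x y)) ∧
     (∀ x y, max 0 (P x y + I x y - 1) = 0)) ∧
    (∀ P' I' : X → X → ℝ,
      (∀ x y, P' x y ∈ Set.Icc (0 : ℝ) 1) → (∀ x y, I' x y ∈ Set.Icc (0 : ℝ) 1) →
      (∀ x y, 0 < P' x y → P' y x = 0) → (∀ x y, I' x y = I' y x) →
      (∀ x y, R x y = min 1 (P' x y + I' x y)) →
      (∀ x y, max 0 (P' x y + I' x y - 1) = 0) →
      P' = P ∧ I' = I) := by
  intro I P
  have hsum : ∀ x y, P x y + I x y = R x y := fun x y => ite_sub_add_min _ _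
  refine ⟨⟨fun x y hpos => ?_, fun x y => min_comm _ _, fun x y => ?_, fun x y => ?_⟩,
    fun P' I' hP' _ hasymm hsymm hS hT => ?_⟩
  · have hlt : R y x < R x y := by
      by_contra h
      exact hpos.ne' (if_neg h)
    exact if_neg (not_lt.mpr hlt.le)
  · rw [hsum, min_eq_right (hR x y).2]
  · rw [hsum, lukasiewicz_tnorm_eq_zero_iff]
    exact (hR x y).2
  · have hsum' : ∀ x y, P' x y + I' x y = R x y := fun x y => by
      rw [hS x y, min_eq_right (lukasiewicz_tnorm_eq_zero_iff.mp (hT x y))]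
    have hI : I' = I := funext₂ (eq_min_of_asymm_add_symm_eq (fun x y => (hP' x y).1)
      hasymm hsymm hsum')
    refine ⟨funext₂ fun x y => ?_, hI⟩
    linarith [hsum x y, hsum' x y, congrFun₂ hI x y]
end

section
/- No fuzzy binary relation space on a set X with at least two elements allows strong decomposition of all its members with respect to the product t-norm T_P(x,y) = xy together with any t-conorm S: there exists a fuzzy binary relation R on X that does not strongly decompose with respect to (T_P, S) for any t-conorm S. Specifically, for w ∈ (0,1), D⁰_{T_P}(w) = {0}, while any R with R(x,y) = 1 and R(y,x) = w ∈ (0,1) would require P(x,y) ∈ D¹_S(w) ∩ D⁰_{T_P}(w), forcing S(0,w) = 1, i.e., w = 1, a contradiction. -/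
/-! With `T(p, i) = p * i`, the condition `T(P, I) = 0` means that at each pair one of `P`, `I`
vanishes. If `R(x, y) = 1`, then either `I(x, y) = 1`, which by symmetry gives `R(y, x) = 1`, or
`P(x, y) = 1`, which by asymmetry gives `R(y, x) = I(y, x) = I(x, y) = 0`. So a relation with
`R(x, y) = 1` and `0 < R(y, x) < 1` cannot be strongly decomposed with respect to `(T_P, S)`. -/

theorem Tconorm.zero_S_s18 (S : Tconorm) (a : unitInterval) : S.S 0 a = a :=
  (S.comm 0 a).trans (S.S_zero a)

theorem eq_zero_or_eq_one_of_productDecomp_of_eq_one {X : Type*} {S : Tconorm}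
    {R P I : X → X → unitInterval} (hP : FAsymm P) (hI : FSymm I)
    (hR : ∀ x y, R x y = S.S (P x y) (I x y)) (hPI : ∀ x y, P x y * I x y = 0) {x y : X}
    (hxy : R x y = 1) : R y x = 0 ∨ R y x = 1 := by
  rw [hR] at hxy
  rcases mul_eq_zero.1 (hPI x y) with hPxy | hIxy
  · have hIxy : I x y = 1 := by rwa [hPxy, S.zero_S_s18] at hxy
    right
    rw [hR, hI, hIxy, S.S_one]
  · have hPxy : P x y = 1 := by rwa [hIxy, S.S_zero] at hxy
    have hPyx : P y x = 0 := hP x y (hPxy ▸ zero_lt_one)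
    left
    rw [hR, hPyx, S.zero_S_s18, hI, hIxy]

theorem not_exists_productDecomp {X : Type*} (S : Tconorm) {R : X → X → unitInterval} {x y : X}
    (hxy : R x y = 1) (hyx₀ : R y x ≠ 0) (hyx₁ : R y x ≠ 1) :
    ¬ ∃ P I : X → X → unitInterval, FAsymm P ∧ FSymm I ∧
        (∀ x y, R x y = S.S (P x y) (I x y)) ∧ ∀ x y, P x y * I x y = 0 := by
  rintro ⟨P, I, hP, hI, hR, hPI⟩
  rcases eq_zero_or_eq_one_of_productDecomp_of_eq_one hP hI hR hPI hxy with h | h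
  exacts [hyx₀ h, hyx₁ h]

/-- On a set with at least two elements, there is a fuzzy binary relation that does not
strongly decompose with respect to the product t-norm together with any t-conorm. -/
theorem product_tnorm_no_strong_decomposition {X : Type*} (hX : ∃ x y : X, x ≠ y) :
    ∃ R : X → X → unitInterval, ∀ S : Tconorm,
      ¬ ∃ P I : X → X → unitInterval, FAsymm P ∧ FSymm I ∧
          (∀ x y, R x y = S.S (P x y) (I x y)) ∧ ∀ x y, P x y * I x y = 0 := by
  classical
  obtain ⟨a, b, hab⟩ := hX
  let half : unitInterval := ⟨1 / 2, by norm_num, by norm_num⟩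
  have half_ne_zero : half ≠ 0 := fun h => by norm_num [half, Subtype.ext_iff] at h
  have half_ne_one : half ≠ 1 := fun h => by norm_num [half, Subtype.ext_iff] at h
  refine ⟨fun u _ => if u = a then 1 else half, fun S => not_exists_productDecomp S
    (x := a) (y := b) (if_pos rfl) ?_ ?_⟩
  · simpa [hab.symm] using half_ne_zero
  · simpa [hab.symm] using half_ne_one
end

section
/- Let S be the ordinal-sum t-conorm defined by S(x,y) = min(0.5, x+y) if x,y ≤ 0.5 and S(x,y) = max(x,y) otherwise. Let X = {x,y} and R the fuzzy binary relation with R(x,y) = R(y,x) = 0.5 and R(x,x) = R(y,y) = 1. Then the pair (P,I) with I(x,x) = I(y,y) = 1, I(x,y) = I(y,x) = 0.5, P(x,y) = 0.5, and P zero elsewhere is a weak decomposition of R with respect to S, yet the triplet (R,P,I) fails property FP4 (since R(x,y) = R(y,x) but P(x,y) > 0) and hence is not a fuzzy preference. -/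
/-- The ordinal-sum t-conorm of a Łukasiewicz summand on `[0, 1/2]`. -/
noncomputable def Sord : ℝ → ℝ → ℝ := fun a b =>
  if a ≤ 1 / 2 ∧ b ≤ 1 / 2 then min (1 / 2) (a + b) else max a b

theorem Sord_zero_left {b : ℝ} (hb : 0 ≤ b) : Sord 0 b = b := by
  unfold Sord
  split_ifs with h
  · simpa using h.2
  · exact max_eq_right hb

theorem Sord_half_half : Sord (1 / 2) (1 / 2) = 1 / 2 := by
  norm_num [Sord]

theorem not_fp4_of_symm_of_pos {α : Type*} {R P : α → α → ℝ} {a b : α}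
    (hR : R a b = R b a) (hP : 0 < P a b) : ¬ ∀ a b, R b a < R a b ↔ 0 < P a b := by
  intro h
  exact (h a b).mpr hP |>.ne hR.symm

/-- `X = {x, y}` is modelled by `Bool`, with `x := true` and `y := false`. -/
theorem ordinal_sum_decomposition_not_preference :
    let R : Bool → Bool → ℝ := fun a b => if a = b then 1 else 1 / 2
    let I : Bool → Bool → ℝ := fun a b => if a = b then 1 else 1 / 2
    let P : Bool → Bool → ℝ := fun a b => if a = true ∧ b = false then 1 / 2 else 0
    ((∀ a b, 0 < P a b → P b a = 0) ∧
     (∀ a b, I a b = I b a) ∧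
     (∀ a b, R a b = Sord (P a b) (I a b)) ∧
     (∀ a b, I a b = 1 → P a b = 0)) ∧
    (R true false = R false true ∧ 0 < P true false) ∧
    ¬ (∀ a b, R b a < R a b ↔ 0 < P a b) := by
  intro R I P
  have hR : R true false = R false true := rfl
  have hP : 0 < P true false := by norm_num [P]
  refine ⟨⟨?_, ?_, ?_, ?_⟩, ⟨hR, hP⟩, not_fp4_of_symm_of_pos hR hP⟩ <;>
    intro a b <;> cases a <;> cases b <;> norm_num [R, I, P, Sord_zero_left, Sord_half_half]
end
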